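/- arXiv:0903.4870 — 3 statements merged into one kernel-verified Lean document; each statement's English description precedes it below -/
import Mathlib

section
/- Let u : L ⟶ M and f : F ⟶ M be morphisms of ℤ-indexed cochain complexes of abelian groups and let k be an integer. Let φ : L ⊕ F ⟶ M be the morphism φ(l,x) = u(l) + f(x), and let φ_k : L ⊕ σ_{≥k}F ⟶ M be its restriction along the inclusion σ_{≥k}F ⊆ F. Then the degreewise maps Cone(φ_k)^n = L^n ⊕ (σ_{≥k}F)^n ⊕ M^{n−1} → Cone(φ)^n = L^n ⊕ F^n ⊕ M^{n−1} induced by the inclusion σ_{≥k}F ⊆ F, and Cone(φ)^n → (σ_{<k}F)^n given by projecting onto the F-component followed by the quotient map F → σ_{<k}F, are chain maps, and they form a short exact sequence of cochain complexes 0 → Cone(φ_k) → Cone(φ) → σ_{<k}F → 0 (exact in every degree). -/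
/-! Basic framework: ℤ-indexed cochain complexes of abelian groups, chain maps,
cohomology, mapping cones (with the sign convention
`d(a,b) = (d a, (-1)^(n+1) f a + d b)`), brutal truncations. -/

universe u

structure Cplx : Type (u + 1) where
  X : ℤ → Type u
  inst : ∀ n, AddCommGroup (X n)
  d : ∀ n, X n →+ X (n + 1)
  dsq : ∀ (n : ℤ) (x : X n), d (n + 1) (d n x) = 0

attribute [instance] Cplx.inst

namespace Cplx

/-- Transport along an equality of degrees. -/
def tr (C : Cplx) {m n : ℤ} (h : m = n) : C.X m →+ C.X n where
  toFun x := _root_.cast (congrArg C.X h) x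
  map_zero' := by subst h; rfl
  map_add' := by subst h; intros; rfl

lemma tr_tr (C : Cplx) {m n p : ℤ} (h1 : m = n) (h2 : n = p) (x : C.X m) :
    C.tr h2 (C.tr h1 x) = C.tr (h1.trans h2) x := by subst h1; subst h2; rfl

lemma d_tr (C : Cplx) {m n : ℤ} (h : m = n) (x : C.X m) :
    C.d n (C.tr h x) = C.tr (congrArg (· + 1) h) (C.d m x) := by subst h; rfl

/-- Morphisms of cochain complexes. -/
structure Hom (A B : Cplx) where
  f : ∀ n, A.X n →+ B.X n
  comm : ∀ (n : ℤ) (x : A.X n), f (n + 1) (A.d n x) = B.d n (f n x)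

def Hom.comp {A B C : Cplx} (g : Hom B C) (h : Hom A B) : Hom A C where
  f n := (g.f n).comp (h.f n)
  comm n x := by simp only [AddMonoidHom.comp_apply, h.comm, g.comm]

lemma Hom.f_tr {A B : Cplx} (g : Hom A B) {m n : ℤ} (h : m = n) (x : A.X m) :
    g.f n (A.tr h x) = B.tr h (g.f m x) := by subst h; rfl

/-- The subgroup of cocycles in degree `n`. -/
def Zc (C : Cplx) (n : ℤ) : AddSubgroup (C.X n) := (C.d n).ker

lemma mem_Zc {C : Cplx} {n : ℤ} {x : C.X n} : x ∈ C.Zc n ↔ C.d n x = 0 :=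
  AddMonoidHom.mem_ker

/-- The subgroup of coboundaries in degree `n`. -/
def Bd (C : Cplx) (n : ℤ) : AddSubgroup (C.X n) :=
  AddSubgroup.map (C.tr (show n - 1 + 1 = n by omega)) (C.d (n - 1)).range

/-- The `n`-th cohomology group. -/
def H (C : Cplx) (n : ℤ) : Type u :=
  ↥(C.Zc n) ⧸ (C.Bd n).addSubgroupOf (C.Zc n)

instance (C : Cplx) (n : ℤ) : AddCommGroup (C.H n) :=
  inferInstanceAs (AddCommGroup (↥(C.Zc n) ⧸ (C.Bd n).addSubgroupOf (C.Zc n)))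

/-- The cohomology class of a cocycle. -/
def clsOf (C : Cplx) (n : ℤ) (x : C.X n) (hx : x ∈ C.Zc n) : C.H n :=
  QuotientAddGroup.mk (⟨x, hx⟩ : C.Zc n)

/-- The map induced on cocycles by a chain map. -/
def zMap {A B : Cplx} (g : Hom A B) (n : ℤ) : ↥(A.Zc n) →+ ↥(B.Zc n) :=
  AddMonoidHom.codRestrict ((g.f n).comp (A.Zc n).subtype) (B.Zc n) (fun x => by
    have hx : A.d n ((A.Zc n).subtype x) = 0 := mem_Zc.mp x.2
    exact mem_Zc.mpr (by rw [AddMonoidHom.comp_apply, ← g.comm, hx, map_zero]))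

/-- The map induced on cohomology by a chain map. -/
def Hmap {A B : Cplx} (g : Hom A B) (n : ℤ) : A.H n →+ B.H n :=
  QuotientAddGroup.map _ _ (zMap g n) (by
    intro x hx
    rw [AddSubgroup.mem_comap, AddSubgroup.mem_addSubgroupOf]
    rw [AddSubgroup.mem_addSubgroupOf] at hx
    obtain ⟨y, hy, hxy⟩ := hx
    obtain ⟨z, rfl⟩ := hy
    have hcoe : ((zMap g n x : ↥(B.Zc n)) : B.X n) = g.f n (x : A.X n) := rfl
    rw [hcoe, ← hxy, Hom.f_tr]
    exact AddSubgroup.mem_map.mpr ⟨B.d (n - 1) (g.f (n - 1) z),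
      AddMonoidHom.mem_range.mpr ⟨g.f (n - 1) z, rfl⟩, by rw [g.comm]⟩)

/-- Direct sum of two cochain complexes. -/
def dsum (A B : Cplx) : Cplx where
  X n := A.X n × B.X n
  inst n := inferInstance
  d n := (A.d n).prodMap (B.d n)
  dsq n x := by
    show (A.d (n + 1) (A.d n x.1), B.d (n + 1) (B.d n x.2)) = 0
    rw [A.dsq, B.dsq]; rfl

/-- The morphism `L ⊕ F ⟶ M`, `(l, x) ↦ u l + g x`. -/
def sumHom {L F M : Cplx} (u : Hom L M) (g : Hom F M) : Hom (dsum L F) M where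
  f n := (u.f n).coprod (g.f n)
  comm n x := by
    show u.f (n + 1) (L.d n x.1) + g.f (n + 1) (F.d n x.2) =
      M.d n (u.f n x.1 + g.f n x.2)
    rw [map_add, u.comm, g.comm]

/-- The mapping cone of a chain map, with differential
`d (a, b) = (d a, (-1)^(n+1) • g a + d b)`. -/
def cone {A B : Cplx} (g : Hom A B) : Cplx where
  X n := A.X n × B.X (n - 1)
  inst n := inferInstance
  d n := AddMonoidHom.mk' (fun p =>
      (A.d n p.1,
        B.tr (show n = n + 1 - 1 by omega) ((Int.negOnePow (n + 1) : ℤ) • g.f n p.1) +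
          B.tr (show n - 1 + 1 = n + 1 - 1 by omega) (B.d (n - 1) p.2)))
    (fun p q => by
      refine Prod.ext (map_add _ _ _) ?_
      show B.tr _ ((Int.negOnePow (n + 1) : ℤ) • g.f n (p.1 + q.1)) +
          B.tr _ (B.d (n - 1) (p.2 + q.2)) = _
      rw [map_add (g.f n), smul_add, map_add, map_add (B.d (n - 1)), map_add]
      simp only [Prod.snd_add]
      abel)
  dsq n p := by
    refine Prod.ext (A.dsq n p.1) ?_
    show B.tr (show n + 1 = n + 1 + 1 - 1 by omega)
          ((Int.negOnePow (n + 1 + 1) : ℤ) • g.f (n + 1) (A.d n p.1)) +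
        B.tr (show n + 1 - 1 + 1 = n + 1 + 1 - 1 by omega)
          (B.d (n + 1 - 1)
            (B.tr (show n = n + 1 - 1 by omega) ((Int.negOnePow (n + 1) : ℤ) • g.f n p.1) +
              B.tr (show n - 1 + 1 = n + 1 - 1 by omega) (B.d (n - 1) p.2))) = 0
    rw [map_add (B.d (n + 1 - 1)), d_tr, d_tr, map_add (B.tr _), tr_tr, tr_tr,
      B.dsq (n - 1) p.2, map_zero, add_zero, g.comm n p.1,
      map_zsmul (B.d n)]
    show B.tr (show n + 1 = n + 1 + 1 - 1 by omega)
        ((Int.negOnePow (n + 1 + 1) : ℤ) • B.d n (g.f n p.1)) +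
      B.tr (show n + 1 = n + 1 + 1 - 1 by omega)
        ((Int.negOnePow (n + 1) : ℤ) • B.d n (g.f n p.1)) = 0
    rw [← map_add, ← add_smul]
    have : ((Int.negOnePow (n + 1 + 1) : ℤ) + (Int.negOnePow (n + 1) : ℤ)) = 0 := by
      rw [Int.negOnePow_succ (n + 1), Units.val_neg, neg_add_cancel]
    rw [this, zero_smul, map_zero]

/-- A subcomplex determined by a `d`-stable family of subgroups. -/
def subCplx (C : Cplx) (S : ∀ n, AddSubgroup (C.X n))
    (hS : ∀ (n : ℤ) (x : C.X n), x ∈ S n → C.d n x ∈ S (n + 1)) : Cplx where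
  X n := S n
  inst n := inferInstance
  d n := AddMonoidHom.codRestrict ((C.d n).comp (S n).subtype) (S (n + 1))
    (fun x => hS n x.1 x.2)
  dsq n x := Subtype.ext (C.dsq n x.1)

/-- The inclusion of a subcomplex. -/
def subIncl (C : Cplx) (S : ∀ n, AddSubgroup (C.X n))
    (hS : ∀ (n : ℤ) (x : C.X n), x ∈ S n → C.d n x ∈ S (n + 1)) :
    Hom (subCplx C S hS) C where
  f n := (S n).subtype
  comm _ _ := rfl

/-- The quotient complex by a `d`-stable family of subgroups. -/
def quotCplx (C : Cplx) (S : ∀ n, AddSubgroup (C.X n))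
    (hS : ∀ (n : ℤ) (x : C.X n), x ∈ S n → C.d n x ∈ S (n + 1)) : Cplx where
  X n := C.X n ⧸ S n
  inst n := inferInstance
  d n := QuotientAddGroup.map (S n) (S (n + 1)) (C.d n) (fun x hx => by
    rw [AddSubgroup.mem_comap]; exact hS n x hx)
  dsq n x := by
    induction x using QuotientAddGroup.induction_on with
    | H z =>
      show QuotientAddGroup.map _ _ _ _ (QuotientAddGroup.map _ _ _ _ ((z : C.X n ⧸ S n))) = 0
      rw [QuotientAddGroup.map_mk, QuotientAddGroup.map_mk, C.dsq]
      rfl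

/-- The projection onto a quotient complex. -/
def quotProj (C : Cplx) (S : ∀ n, AddSubgroup (C.X n))
    (hS : ∀ (n : ℤ) (x : C.X n), x ∈ S n → C.d n x ∈ S (n + 1)) :
    Hom C (quotCplx C S hS) where
  f n := QuotientAddGroup.mk' (S n)
  comm _ _ := rfl

/-- The family of subgroups defining the brutal truncation `σ_{≥k}`. -/
def geSub (F : Cplx) (k n : ℤ) : AddSubgroup (F.X n) := if k ≤ n then ⊤ else ⊥

lemma geSub_stable (F : Cplx) (k : ℤ) :
    ∀ (n : ℤ) (x : F.X n), x ∈ geSub F k n → F.d n x ∈ geSub F k (n + 1) := by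
  intro n x hx
  by_cases h : k ≤ n + 1
  · simp [geSub, h]
  · have h' : ¬ k ≤ n := by omega
    simp only [geSub, h', if_neg, if_false, AddSubgroup.mem_bot] at hx
    simp [geSub, h, hx]

/-- The brutal truncation `σ_{≥k} F` (a subcomplex of `F`). -/
def truncGE (F : Cplx) (k : ℤ) : Cplx := subCplx F (geSub F k) (geSub_stable F k)

/-- The inclusion `σ_{≥k} F ⟶ F`. -/
def truncGEincl (F : Cplx) (k : ℤ) : Hom (truncGE F k) F :=
  subIncl F (geSub F k) (geSub_stable F k)

/-- The brutal truncation `σ_{<k} F` (a quotient complex of `F`). -/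
def truncLT (F : Cplx) (k : ℤ) : Cplx := quotCplx F (geSub F k) (geSub_stable F k)

/-- The projection `F ⟶ σ_{<k} F`. -/
def truncLTproj (F : Cplx) (k : ℤ) : Hom F (truncLT F k) :=
  quotProj F (geSub F k) (geSub_stable F k)

end Cplx

/-! The truncation plays no special role: for any subcomplex `S ⊆ F`, the sequence
`Cone(φ|_S) → Cone(φ) → F/S` is degreewise `0 → S → F → F/S → 0` summed with the identities
of `L^n` and `M^{n-1}`, and both maps commute with the cone differentials on the nose. -/

namespace Cplx

variable {L M F : Cplx} (u : Hom L M) (f : Hom F M) (S : ∀ n, AddSubgroup (F.X n))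
  (hS : ∀ (n : ℤ) (x : F.X n), x ∈ S n → F.d n x ∈ S (n + 1))

def coneSubIncl : Hom (cone (sumHom u (f.comp (subIncl F S hS)))) (cone (sumHom u f)) where
  f n := ((AddMonoidHom.id _).prodMap (S n).subtype).prodMap (AddMonoidHom.id _)
  comm _ _ := rfl

def coneQuotProj : Hom (cone (sumHom u f)) (quotCplx F S hS) where
  f n := (QuotientAddGroup.mk' (S n)).comp
    ((AddMonoidHom.snd _ _).comp (AddMonoidHom.fst _ (M.X (n - 1))))
  comm _ _ := rfl

theorem coneSubIncl_injective (n : ℤ) : Function.Injective ((coneSubIncl u f S hS).f n) :=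
  (Function.injective_id.prodMap Subtype.val_injective).prodMap Function.injective_id

theorem coneQuotProj_ker_eq_coneSubIncl_range (n : ℤ) :
    ((coneQuotProj u f S hS).f n).ker = ((coneSubIncl u f S hS).f n).range := by
  ext p
  constructor
  · intro hp
    exact ⟨((p.1.1, ⟨p.1.2, (QuotientAddGroup.eq_zero_iff _).mp hp⟩), p.2), rfl⟩
  · rintro ⟨q, rfl⟩
    exact (QuotientAddGroup.eq_zero_iff _).mpr q.1.2.2

theorem coneQuotProj_surjective (n : ℤ) : Function.Surjective ((coneQuotProj u f S hS).f n) :=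
  QuotientAddGroup.mk_surjective.forall.mpr fun x => ⟨((0, x), 0), rfl⟩

end Cplx

open Cplx in
/-- The short exact sequence of cone complexes
`0 → Cone(φ_k) → Cone(φ) → σ_{<k}F → 0`. -/
theorem stmt0 (L M F : Cplx) (u : Cplx.Hom L M) (f : Cplx.Hom F M) (k : ℤ) :
    ∃ (a : Cplx.Hom (cone (sumHom u (f.comp (truncGEincl F k)))) (cone (sumHom u f)))
      (b : Cplx.Hom (cone (sumHom u f)) (truncLT F k)),
      (∀ (n : ℤ) (p : (cone (sumHom u (f.comp (truncGEincl F k)))).X n),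
          a.f n p = ((p.1.1, (truncGEincl F k).f n p.1.2), p.2)) ∧
      (∀ (n : ℤ) (p : (cone (sumHom u f)).X n),
          b.f n p = QuotientAddGroup.mk' (geSub F k n) p.1.2) ∧
      (∀ n, Function.Injective (a.f n)) ∧
      (∀ n, (b.f n).ker = (a.f n).range) ∧
      (∀ n, Function.Surjective (b.f n)) := by
  refine ⟨coneSubIncl u f (geSub F k) (geSub_stable F k),
    coneQuotProj u f (geSub F k) (geSub_stable F k), fun _ _ => rfl, fun _ _ => rfl,
    coneSubIncl_injective u f _ _, coneQuotProj_ker_eq_coneSubIncl_range u f _ _,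
    coneQuotProj_surjective u f _ _⟩
end

section
/- Let 0 → L →u M →p N → 0 be a short exact sequence of ℤ-indexed cochain complexes of abelian groups (exact in every degree), and let f : F ⟶ M be a morphism of cochain complexes. Let φ : L ⊕ F ⟶ M be the morphism φ(l,x) = u(l) + f(x), and let ψ = p ∘ f : F ⟶ N. Then the degreewise map Cone(φ)^n = L^n ⊕ F^n ⊕ M^{n−1} → Cone(ψ)^n = F^n ⊕ N^{n−1} sending (l, x, m) to (x, p(m)) is a chain map Cone(φ) → Cone(ψ), and it is a quasi-isomorphism, i.e. it induces an isomorphism on cohomology in every degree. -/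
/-! Basic framework: ℤ-indexed cochain complexes of abelian groups, chain maps,
cohomology, mapping cones (with the sign convention
`d(a,b) = (d a, (-1)^(n+1) f a + d b)`), brutal truncations. -/

universe u

namespace Cplx

/-! In degree `n`, a cocycle of `cone g` is a pair `(a, b)` with `d a = 0` and
`g a = (-1)^n d b`. The map `(l, x, m) ↦ (x, p m)` is degreewise surjective with kernel
`{(l, 0, u l')}`, a copy of the acyclic cone of `id_L`; the proof is the resulting chase.
A cocycle `(x, p m)` of `Cone(p ∘ f)` is hit by the cocycle `(l, x, m)` where
`u l = (-1)^n d m - f x`, which exists since `p` kills the right-hand side. If a cocycle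
`(l, x, m)` maps to `d (y, p m')`, then `m - (-1)^n f y - d m' = u l'` for some `l'`, and
`(l, x, m) = d ((-1)^n l', y, m')`, the first component by injectivity of `u`. -/

lemma tr_rfl (C : Cplx) {n : ℤ} (h : n = n) (x : C.X n) : C.tr h x = x := rfl

lemma tr_eq_zero_iff (C : Cplx) {m n : ℤ} (h : m = n) (x : C.X m) :
    C.tr h x = 0 ↔ x = 0 := by
  subst h; exact Iff.rfl

lemma dsum_tr (A B : Cplx) {m n : ℤ} (h : m = n) (x : (dsum A B).X m) :
    (dsum A B).tr h x = (A.tr h x.1, B.tr h x.2) := by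
  subst h; rfl

lemma cone_tr {A B : Cplx} (g : Hom A B) {m n : ℤ} (h : m = n) (x : (cone g).X m) :
    (cone g).tr h x = (A.tr h x.1, B.tr (congrArg (· - 1) h) x.2) := by
  subst h; rfl

lemma cone_d {A B : Cplx} (g : Hom A B) (n : ℤ) (a : A.X n) (b : B.X (n - 1)) :
    (cone g).d n (a, b) =
      (A.d n a,
        B.tr (show n = n + 1 - 1 by omega) ((Int.negOnePow (n + 1) : ℤ) • g.f n a) +
          B.tr (show n - 1 + 1 = n + 1 - 1 by omega) (B.d (n - 1) b)) := rfl

lemma negOnePow_smul_negOnePow_smul {G : Type*} [AddCommGroup G] (k : ℤ) (x : G) :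
    (Int.negOnePow k : ℤ) • (Int.negOnePow k : ℤ) • x = x := by
  rw [smul_smul, ← Units.val_mul, Int.units_mul_self, Units.val_one, one_smul]

lemma mem_Bd_iff {C : Cplx} {n : ℤ} {x : C.X n} :
    x ∈ C.Bd n ↔ ∃ y : C.X (n - 1), C.tr (show n - 1 + 1 = n by omega) (C.d (n - 1) y) = x := by
  simp only [Bd, AddSubgroup.mem_map, AddMonoidHom.mem_range, exists_exists_eq_and]

lemma mem_Zc_cone {A B : Cplx} (g : Hom A B) (n : ℤ) (a : A.X n) (b : B.X (n - 1)) :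
    (a, b) ∈ (cone g).Zc n ↔ A.d n a = 0 ∧
      g.f n a = (Int.negOnePow n : ℤ) • B.tr (show n - 1 + 1 = n by omega) (B.d (n - 1) b) := by
  have hsnd : B.tr (show n = n + 1 - 1 by omega) ((Int.negOnePow (n + 1) : ℤ) • g.f n a) +
      B.tr (show n - 1 + 1 = n + 1 - 1 by omega) (B.d (n - 1) b) =
      B.tr (show n = n + 1 - 1 by omega) ((Int.negOnePow n : ℤ) •
        ((Int.negOnePow n : ℤ) • B.tr (show n - 1 + 1 = n by omega) (B.d (n - 1) b) - g.f n a)) := by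
    rw [smul_sub, negOnePow_smul_negOnePow_smul, map_sub, tr_tr, Int.negOnePow_succ,
      Units.val_neg, neg_smul, map_neg]
    abel
  refine mem_Zc.trans ?_
  rw [cone_d]
  change ((A.d n a, _) : A.X (n + 1) × B.X (n + 1 - 1)) = 0 ↔ _
  rw [Prod.mk_eq_zero, hsnd, tr_eq_zero_iff, ← Units.smul_def, smul_eq_zero_iff_eq,
    sub_eq_zero, eq_comm (a := g.f n a)]

lemma cone_tr_d {A B : Cplx} (g : Hom A B) (n : ℤ) (a : A.X (n - 1)) (b : B.X (n - 1 - 1)) :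
    (cone g).tr (show n - 1 + 1 = n by omega) ((cone g).d (n - 1) (a, b)) =
      (A.tr (show n - 1 + 1 = n by omega) (A.d (n - 1) a),
        (Int.negOnePow n : ℤ) • g.f (n - 1) a +
          B.tr (show n - 1 - 1 + 1 = n - 1 by omega) (B.d (n - 1 - 1) b)) := by
  have hsign : Int.negOnePow (n - 1 + 1) = Int.negOnePow n := by rw [sub_add_cancel]
  rw [cone_tr, cone_d, map_add, tr_tr, tr_tr, tr_rfl, hsign]

lemma mem_Bd_cone {A B : Cplx} (g : Hom A B) (n : ℤ) (a : A.X n) (b : B.X (n - 1)) :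
    (a, b) ∈ (cone g).Bd n ↔ ∃ (a' : A.X (n - 1)) (b' : B.X (n - 1 - 1)),
      A.tr (show n - 1 + 1 = n by omega) (A.d (n - 1) a') = a ∧
      (Int.negOnePow n : ℤ) • g.f (n - 1) a' +
        B.tr (show n - 1 - 1 + 1 = n - 1 by omega) (B.d (n - 1 - 1) b') = b := by
  refine mem_Bd_iff.trans ⟨fun ⟨⟨a', b'⟩, h⟩ => ?_, fun ⟨a', b', ha, hb⟩ => ⟨(a', b'), ?_⟩⟩
  · rw [cone_tr_d] at h
    exact ⟨a', b', congrArg Prod.fst h, congrArg Prod.snd h⟩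
  · rw [cone_tr_d, ha, hb]

lemma Hmap_injective_of_forall_mem_Bd {A B : Cplx} (g : Hom A B) (n : ℤ)
    (h : ∀ z ∈ A.Zc n, g.f n z ∈ B.Bd n → z ∈ A.Bd n) : Function.Injective (Hmap g n) := by
  refine (injective_iff_map_eq_zero _).mpr fun c hc => ?_
  obtain ⟨z, rfl⟩ := QuotientAddGroup.mk_surjective c
  have hgz : g.f n z ∈ B.Bd n :=
    AddSubgroup.mem_addSubgroupOf.mp ((QuotientAddGroup.eq_zero_iff _).mp hc)
  exact (QuotientAddGroup.eq_zero_iff _).mpr (AddSubgroup.mem_addSubgroupOf.mpr (h z z.2 hgz))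

lemma Hmap_surjective_of_zMap_surjective {A B : Cplx} (g : Hom A B) (n : ℤ)
    (h : Function.Surjective (zMap g n)) : Function.Surjective (Hmap g n) := by
  intro c
  obtain ⟨w, rfl⟩ := QuotientAddGroup.mk_surjective c
  obtain ⟨z, rfl⟩ := h w
  exact ⟨QuotientAddGroup.mk z, rfl⟩

lemma _root_.AddMonoidHom.exists_eq_sub_of_ker_eq_range {A B C : Type*} [AddGroup A]
    [AddGroup B] [AddGroup C] {u : A →+ B} {p : B →+ C} (h : p.ker = u.range) {b b' : B}
    (hb : p b = p b') : ∃ a, u a = b - b' := by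
  have hmem : b - b' ∈ p.ker := by rw [AddMonoidHom.mem_ker, map_sub, hb, sub_self]
  rwa [h] at hmem

section ShortExact

variable {L M N F : Cplx} {u : Hom L M} {p : Hom M N} (f : Hom F M)
  (hpu : ∀ (n : ℤ) (l : L.X n), p.f n (u.f n l) = 0)

def coneSumHomToConeComp : Hom (cone (sumHom u f)) (cone (p.comp f)) where
  f n := AddMonoidHom.mk' (fun z => (z.1.2, p.f (n - 1) z.2))
    (fun z w => Prod.ext rfl (map_add _ _ _))
  comm n := by
    rintro ⟨⟨l, x⟩, m⟩
    refine Prod.ext_iff.mpr ⟨rfl, ?_⟩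
    change p.f _ (M.tr _ (_ • (u.f n l + f.f n x)) + M.tr _ (M.d (n - 1) m)) =
      N.tr _ (_ • p.f n (f.f n x)) + N.tr _ (N.d (n - 1) (p.f (n - 1) m))
    rw [map_add, Hom.f_tr, Hom.f_tr, map_zsmul, map_add, hpu, zero_add, p.comm]

theorem zMap_coneSumHomToConeComp_surjective (hinj : ∀ n, Function.Injective (u.f n))
    (hexact : ∀ n, (p.f n).ker = (u.f n).range) (hsurj : ∀ n, Function.Surjective (p.f n))
    (n : ℤ) : Function.Surjective (zMap (coneSumHomToConeComp f hpu) n) := by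
  rintro ⟨⟨x, ν⟩, hw⟩
  obtain ⟨hx, hxν⟩ := (mem_Zc_cone _ n x ν).mp hw
  obtain ⟨m, rfl⟩ := hsurj (n - 1) ν
  obtain ⟨l, hl⟩ := AddMonoidHom.exists_eq_sub_of_ker_eq_range (hexact n)
    (b := (Int.negOnePow n : ℤ) • M.tr (show n - 1 + 1 = n by omega) (M.d (n - 1) m))
    (b' := f.f n x) (by rw [map_zsmul, Hom.f_tr, p.comm]; exact hxν.symm)
  have hdl : L.d n l = 0 := hinj (n + 1) <| by
    rw [u.comm, hl, map_sub, map_zsmul, d_tr, M.dsq, map_zero, map_zero, smul_zero, ← f.comm,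
      hx, map_zero, sub_zero]
  have hz : ((l, x), m) ∈ (cone (sumHom u f)).Zc n := by
    refine (mem_Zc_cone (sumHom u f) n (l, x) m).mpr ⟨Prod.ext_iff.mpr ⟨hdl, hx⟩, ?_⟩
    show u.f n l + f.f n x = _
    rw [hl, sub_add_cancel]
  exact ⟨⟨((l, x), m), hz⟩, rfl⟩

theorem mem_Bd_of_coneSumHomToConeComp_mem_Bd (hinj : ∀ n, Function.Injective (u.f n))
    (hexact : ∀ n, (p.f n).ker = (u.f n).range) (hsurj : ∀ n, Function.Surjective (p.f n))
    (n : ℤ) (z : (cone (sumHom u f)).X n) (hz : z ∈ (cone (sumHom u f)).Zc n)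
    (hθz : (coneSumHomToConeComp f hpu).f n z ∈ (cone (p.comp f)).Bd n) :
    z ∈ (cone (sumHom u f)).Bd n := by
  obtain ⟨⟨l, x⟩, m⟩ := z
  have hm : u.f n l + f.f n x =
      (Int.negOnePow n : ℤ) • M.tr (show n - 1 + 1 = n by omega) (M.d (n - 1) m) :=
    ((mem_Zc_cone (sumHom u f) n (l, x) m).mp hz).2
  obtain ⟨y, ν, hy, hν⟩ := (mem_Bd_cone _ n x (p.f (n - 1) m)).mp hθz
  obtain ⟨m', rfl⟩ := hsurj _ ν
  obtain ⟨l', hl'⟩ := AddMonoidHom.exists_eq_sub_of_ker_eq_range (hexact (n - 1)) (b := m)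
    (b' := (Int.negOnePow n : ℤ) • f.f (n - 1) y +
      M.tr (show n - 1 - 1 + 1 = n - 1 by omega) (M.d (n - 1 - 1) m'))
    (by rw [map_add, map_zsmul, Hom.f_tr, p.comm]; exact hν.symm)
  refine (mem_Bd_cone (sumHom u f) n (l, x) m).mpr
    ⟨((Int.negOnePow n : ℤ) • l', y), m', ?_, ?_⟩
  · rw [dsum_tr]
    refine Prod.ext_iff.mpr ⟨hinj n ?_, hy⟩
    change u.f n (L.tr _ (L.d (n - 1) ((Int.negOnePow n : ℤ) • l'))) = u.f n l
    -- both sides equal `(-1)^n d m - f x`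
    rw [eq_sub_of_add_eq hm, ← hy, Hom.f_tr, Hom.f_tr, u.comm, f.comm, map_zsmul, hl', map_zsmul,
      map_sub, map_add, map_zsmul, d_tr, M.dsq, map_zero, add_zero, map_zsmul,
      map_sub, map_zsmul, smul_sub, negOnePow_smul_negOnePow_smul]
  · show (Int.negOnePow n : ℤ) • (u.f (n - 1) ((Int.negOnePow n : ℤ) • l') + f.f (n - 1) y) +
      M.tr _ (M.d (n - 1 - 1) m') = m
    rw [map_zsmul, hl', smul_add, negOnePow_smul_negOnePow_smul]
    abel

end ShortExact

end Cplx

open Cplx in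
/-- The map `Cone(φ) → Cone(ψ)`, `(l, x, m) ↦ (x, p m)` is a chain map and a
quasi-isomorphism. -/
theorem stmt1 (L M N F : Cplx) (u : Cplx.Hom L M) (p : Cplx.Hom M N)
    (hinj : ∀ n, Function.Injective (u.f n))
    (hexact : ∀ n, (p.f n).ker = (u.f n).range)
    (hsurj : ∀ n, Function.Surjective (p.f n))
    (f : Cplx.Hom F M) :
    ∃ θ : Cplx.Hom (cone (sumHom u f)) (cone (p.comp f)),
      (∀ (n : ℤ) (x : (cone (sumHom u f)).X n),
          θ.f n x = (x.1.2, p.f (n - 1) x.2)) ∧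
      (∀ n, Function.Bijective (Hmap θ n)) := by
  have hpu : ∀ (n : ℤ) (l : L.X n), p.f n (u.f n l) = 0 := fun n l =>
    AddMonoidHom.mem_ker.mp ((hexact n).ge ⟨l, rfl⟩)
  refine ⟨coneSumHomToConeComp f hpu, fun _ _ => rfl, fun n => ⟨?_, ?_⟩⟩
  · exact Hmap_injective_of_forall_mem_Bd _ n
      (mem_Bd_of_coneSumHomToConeComp_mem_Bd f hpu hinj hexact hsurj n)
  · exact Hmap_surjective_of_zMap_surjective _ n
      (zMap_coneSumHomToConeComp_surjective f hpu hinj hexact hsurj n)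
end

section
/- Let u : L ⟶ M and f : F ⟶ M be morphisms of ℤ-indexed cochain complexes of abelian groups and let k be an integer. Let φ : L ⊕ F ⟶ M be the morphism φ(l,x) = u(l) + f(x), and let φ_k : L ⊕ σ_{≥k}F ⟶ M be its restriction along the inclusion σ_{≥k}F ⊆ F. Then the map on k-th cohomology H^k(Cone(φ_k)) → H^k(Cone(φ)) induced by the inclusion Cone(φ_k) ⊆ Cone(φ) is surjective. -/
/-! Basic framework: ℤ-indexed cochain complexes of abelian groups, chain maps,
cohomology, mapping cones (with the sign convention
`d(a,b) = (d a, (-1)^(n+1) f a + d b)`), brutal truncations. -/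

universe u

open Cplx in
/-- The inclusion of mapping cones induced by the inclusion `σ_{≥k} F ⊆ F`. -/
def Cplx.coneIncl (L M F : Cplx) (u : Cplx.Hom L M) (f : Cplx.Hom F M) (k : ℤ) :
    Cplx.Hom (cone (sumHom u (f.comp (truncGEincl F k)))) (cone (sumHom u f)) where
  f n := ((AddMonoidHom.id (L.X n)).prodMap (geSub F k n).subtype).prodMap
      (AddMonoidHom.id (M.X (n - 1)))
  comm _ _ := rfl

/-! The inclusion of cones is injective in every degree and bijective in degrees `≥ k`, since
`σ_{≥k} F` agrees with `F` there. A chain map that is surjective in degree `k` and injective in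
degree `k + 1` is surjective on `H^k`: a preimage of a cocycle is a cocycle, because its
differential maps to zero under an injective map. -/

namespace Cplx

lemma zMap_surjective_of_surjective_of_injective {A B : Cplx} (g : Hom A B) {n : ℤ}
    (hsurj : Function.Surjective (g.f n)) (hinj : Function.Injective (g.f (n + 1))) :
    Function.Surjective (zMap g n) := by
  rintro ⟨y, hy⟩
  obtain ⟨x, rfl⟩ := hsurj y
  have hx : x ∈ A.Zc n := mem_Zc.mpr <| hinj <| by
    rw [g.comm, mem_Zc.mp hy, map_zero]
  exact ⟨⟨x, hx⟩, rfl⟩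

lemma Hmap_surjective_of_surjective_of_injective {A B : Cplx} (g : Hom A B) {n : ℤ}
    (hsurj : Function.Surjective (g.f n)) (hinj : Function.Injective (g.f (n + 1))) :
    Function.Surjective (Hmap g n) := by
  intro c
  induction c using QuotientAddGroup.induction_on with
  | H y =>
    obtain ⟨x, rfl⟩ := zMap_surjective_of_surjective_of_injective g hsurj hinj y
    exact ⟨QuotientAddGroup.mk x, rfl⟩

variable (L M F : Cplx) (u : Hom L M) (f : Hom F M) (k : ℤ)

lemma coneIncl_f_injective (n : ℤ) : Function.Injective ((coneIncl L M F u f k).f n) :=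
  (Function.injective_id.prodMap (geSub F k n).subtype_injective).prodMap Function.injective_id

lemma coneIncl_f_surjective {n : ℤ} (hkn : k ≤ n) :
    Function.Surjective ((coneIncl L M F u f k).f n) := by
  rintro ⟨⟨l, x⟩, m⟩
  have hx : x ∈ geSub F k n := by simp [geSub, hkn]
  exact ⟨⟨⟨l, ⟨x, hx⟩⟩, m⟩, rfl⟩

end Cplx

open Cplx in
/-- Surjectivity of `H^k(Cone(φ_k)) → H^k(Cone(φ))`. -/
theorem stmt2 (L M F : Cplx) (u : Cplx.Hom L M) (f : Cplx.Hom F M) (k : ℤ) :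
    Function.Surjective (Hmap (Cplx.coneIncl L M F u f k) k) :=
  Hmap_surjective_of_surjective_of_injective _ (coneIncl_f_surjective L M F u f k le_rfl)
    (coneIncl_f_injective L M F u f k (k + 1))
end
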